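/- arXiv:2509.25145 — 2 statements merged into one kernel-verified Lean document; each statement's English description precedes it below -/
import Mathlib

section
/- Let M = [[A, B], [B*, C]] be a positive semidefinite Hermitian block matrix with rank(M) = rank(A). Then there exists a matrix W such that B = A·W and C = W*·A·W. -/
open scoped ComplexOrder

/-- Flat extension: if the PSD Hermitian block matrix `M = [[A, B], [B.conjTranspose, C]]`
satisfies `rank M = rank A`, then `B = A·W` and `C = W.conjTranspose·A·W` for some `W`. -/
theorem stmt_12 (n m : ℕ) (A : Matrix (Fin n) (Fin n) ℂ)
    (B : Matrix (Fin n) (Fin m) ℂ) (C : Matrix (Fin m) (Fin m) ℂ)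
    (hM : (Matrix.fromBlocks A B B.conjTranspose C).PosSemidef)
    (hrank : (Matrix.fromBlocks A B B.conjTranspose C).rank = A.rank) :
    ∃ W : Matrix (Fin n) (Fin m) ℂ, B = A * W ∧ C = W.conjTranspose * A * W := by
  classical
  obtain ⟨X, hX⟩ : ∃ X : Matrix (Fin n ⊕ Fin m) (Fin n ⊕ Fin m) ℂ,
      Matrix.fromBlocks A B B.conjTranspose C = X.conjTranspose * X := by
    open scoped MatrixOrder in
    exact CStarAlgebra.nonneg_iff_eq_star_mul_self.mp hM.nonneg
  set X₁ : Matrix (Fin n ⊕ Fin m) (Fin n) ℂ := X.submatrix id Sum.inl with hX₁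
  set X₂ : Matrix (Fin n ⊕ Fin m) (Fin m) ℂ := X.submatrix id Sum.inr with hX₂
  have hA : A = X₁.conjTranspose * X₁ := by
    ext i j
    have := congrFun (congrFun hX (Sum.inl i)) (Sum.inl j)
    simpa [Matrix.mul_apply, Matrix.conjTranspose_apply, hX₁] using this
  have hB : B = X₁.conjTranspose * X₂ := by
    ext i j
    have := congrFun (congrFun hX (Sum.inl i)) (Sum.inr j)
    simpa [Matrix.mul_apply, Matrix.conjTranspose_apply, hX₁, hX₂] using this
  have hC : C = X₂.conjTranspose * X₂ := by
    ext i j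
    have := congrFun (congrFun hX (Sum.inr i)) (Sum.inr j)
    simpa [Matrix.mul_apply, Matrix.conjTranspose_apply, hX₂] using this
  -- ranks
  have hrX : X.rank = X₁.rank := by
    have h1 : (Matrix.fromBlocks A B B.conjTranspose C).rank = X.rank := by
      rw [hX, Matrix.rank_conjTranspose_mul_self]
    have h2 : A.rank = X₁.rank := by
      rw [hA, Matrix.rank_conjTranspose_mul_self]
    rw [← h1, ← h2, hrank]
  -- range inclusions
  have hle1 : LinearMap.range X₁.mulVecLin ≤ LinearMap.range X.mulVecLin := by
    rintro _ ⟨v, rfl⟩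
    refine ⟨Sum.elim v 0, ?_⟩
    ext k
    simp [Matrix.mulVecLin, Matrix.mulVec, dotProduct, Fintype.sum_sum_type, hX₁]
  have hle2 : LinearMap.range X₂.mulVecLin ≤ LinearMap.range X.mulVecLin := by
    rintro _ ⟨v, rfl⟩
    refine ⟨Sum.elim 0 v, ?_⟩
    ext k
    simp [Matrix.mulVecLin, Matrix.mulVec, dotProduct, Fintype.sum_sum_type, hX₂]
  have heq : LinearMap.range X₁.mulVecLin = LinearMap.range X.mulVecLin :=
    Submodule.eq_of_le_of_finrank_eq hle1 hrX.symm
  have hle : LinearMap.range X₂.mulVecLin ≤ LinearMap.range X₁.mulVecLin := by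
    rw [heq]; exact hle2
  -- each column of X₂ is in the range of X₁
  have hcol : ∀ j : Fin m, ∃ w : Fin n → ℂ, X₁.mulVec w = fun k => X₂ k j := by
    intro j
    have : (X₂.mulVec (Pi.single j 1)) ∈ LinearMap.range X₁.mulVecLin :=
      hle ⟨Pi.single j 1, rfl⟩
    obtain ⟨w, hw⟩ := this
    refine ⟨w, ?_⟩
    have hw' : X₁.mulVec w = X₂.mulVec (Pi.single j 1) := hw
    rw [hw']
    ext k
    simp [Matrix.mulVec, dotProduct, Pi.single_apply]
  choose w hw using hcol
  set W : Matrix (Fin n) (Fin m) ℂ := Matrix.of fun i j => w j i with hW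
  have hX₂W : X₂ = X₁ * W := by
    ext k j
    have := congrFun (hw j) k
    simpa [Matrix.mul_apply, Matrix.mulVec, dotProduct, hW] using this.symm
  refine ⟨W, ?_, ?_⟩
  · rw [hB, hX₂W, hA, Matrix.mul_assoc]
  · rw [hC, hX₂W, hA, Matrix.conjTranspose_mul]
    simp only [Matrix.mul_assoc]
end

section
/- Let Γ_comp be an N×N Hermitian positive semidefinite matrix with (Γ_comp)_{1,1} = 1 and diagonal entries ≤ 1, let E be a linear map on Hermitian N×N matrices with ‖E(Γ_comp)‖ ≤ δ, and suppose there exists a Hermitian Γ_s ∈ ker E with Γ_s ⪰ μ·I (μ > 0), ‖Γ_s‖_op ≤ N, and (Γ_s)_{1,1} = 1. Then there exists a positive semidefinite Hermitian matrix Γ ∈ ker E with Γ_{1,1} = 1 and ‖Γ_comp − Γ‖_op ≤ C·δ, where C is a constant depending only on N, μ, and ‖E†‖_op (for small enough δ), provided the constraints defined by E are homogeneous and preserved by the construction (projection onto ker E, convex combination with Γ_s, and renormalization of the (1,1) entry). -/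
open scoped Matrix.Norms.L2Operator ComplexOrder

open Matrix

private lemma aux_dot_eq_inner (x y : Fin N → ℂ) :
    dotProduct (star x) y
      = @inner ℂ _ _ ((WithLp.equiv 2 _).symm x : EuclideanSpace ℂ (Fin N)) ((WithLp.equiv 2 _).symm y) := by
  exact dotProduct_comm _ _

private lemma aux_qbound (A : Matrix (Fin N) (Fin N) ℂ) (x : Fin N → ℂ) :
    ‖dotProduct (star x) (A *ᵥ x)‖
      ≤ ‖A‖ * ‖((WithLp.equiv 2 _).symm x : EuclideanSpace ℂ (Fin N))‖ ^ 2 := by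
  rw [aux_dot_eq_inner]
  calc ‖@inner ℂ _ _ ((WithLp.equiv 2 _).symm x : EuclideanSpace ℂ (Fin N)) ((WithLp.equiv 2 _).symm (A *ᵥ x))‖
      ≤ ‖((WithLp.equiv 2 _).symm x : EuclideanSpace ℂ (Fin N))‖ * ‖((WithLp.equiv 2 _).symm (A *ᵥ x) : EuclideanSpace ℂ (Fin N))‖ :=
        norm_inner_le_norm _ _
    _ ≤ ‖((WithLp.equiv 2 _).symm x : EuclideanSpace ℂ (Fin N))‖ * (‖A‖ * ‖((WithLp.equiv 2 _).symm x : EuclideanSpace ℂ (Fin N))‖) := by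
        gcongr
        exact A.l2_opNorm_mulVec ((WithLp.equiv 2 _).symm x)
    _ = ‖A‖ * ‖((WithLp.equiv 2 _).symm x : EuclideanSpace ℂ (Fin N))‖ ^ 2 := by ring

private lemma aux_herm_real {A : Matrix (Fin N) (Fin N) ℂ} (hA : A.IsHermitian)
    (x : Fin N → ℂ) : (dotProduct (star x) (A *ᵥ x)).im = 0 := by
  have h : (starRingEnd ℂ) (dotProduct (star x) (A *ᵥ x))
      = dotProduct (star x) (A *ᵥ x) := by
    rw [starRingEnd_apply]
    calc star (star x ⬝ᵥ A *ᵥ x) = star (A *ᵥ x) ⬝ᵥ star (star x) :=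
            (Matrix.star_dotProduct_star _ _).symm
      _ = (star x ᵥ* Aᴴ) ⬝ᵥ x := by rw [Matrix.star_mulVec, star_star]
      _ = star x ⬝ᵥ (Aᴴ *ᵥ x) := (Matrix.dotProduct_mulVec _ _ _).symm
      _ = star x ⬝ᵥ (A *ᵥ x) := by rw [hA.eq]
  exact Complex.conj_eq_iff_im.mp h

private lemma aux_nsq (x : Fin N → ℂ) :
    (dotProduct (star x) x).re
      = ‖((WithLp.equiv 2 _).symm x : EuclideanSpace ℂ (Fin N))‖ ^ 2 := by
  rw [aux_dot_eq_inner]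
  exact_mod_cast @inner_self_eq_norm_sq ℂ _ _ _ _ ((WithLp.equiv 2 _).symm x)

private lemma aux_psd_of_re {A : Matrix (Fin N) (Fin N) ℂ} (hA : A.IsHermitian)
    (h : ∀ x : Fin N → ℂ, 0 ≤ (dotProduct (star x) (A *ᵥ x)).re) :
    A.PosSemidef := by
  refine Matrix.PosSemidef.of_dotProduct_mulVec_nonneg hA fun x => ?_
  rw [Complex.nonneg_iff]
  exact ⟨h x, (aux_herm_real hA x).symm⟩

private lemma aux_entry_le (A : Matrix (Fin N) (Fin N) ℂ) (i j : Fin N) :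
    ‖A i j‖ ≤ ‖A‖ := by
  classical
  have h1 : A *ᵥ Pi.single j 1 = fun k => A k j := by
    funext k
    simp [Matrix.mulVec_single]
  have h2 : A i j = @inner ℂ _ _ (EuclideanSpace.single i (1:ℂ))
      ((WithLp.equiv 2 _).symm (A *ᵥ Pi.single j 1) : EuclideanSpace ℂ (Fin N)) := by
    rw [EuclideanSpace.inner_single_left]
    simp [h1]
  calc ‖A i j‖ = ‖@inner ℂ _ _ (EuclideanSpace.single i (1:ℂ))
        ((WithLp.equiv 2 _).symm (A *ᵥ Pi.single j 1) : EuclideanSpace ℂ (Fin N))‖ := by rw [← h2]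
    _ ≤ ‖EuclideanSpace.single i (1:ℂ)‖ * ‖((WithLp.equiv 2 _).symm (A *ᵥ Pi.single j 1) : EuclideanSpace ℂ (Fin N))‖ :=
        norm_inner_le_norm _ _
    _ ≤ ‖EuclideanSpace.single i (1:ℂ)‖ * (‖A‖ * ‖((WithLp.equiv 2 _).symm (Pi.single j 1) : EuclideanSpace ℂ (Fin N))‖) := by
        gcongr; exact A.l2_opNorm_mulVec ((WithLp.equiv 2 _).symm (Pi.single j 1))
    _ ≤ ‖A‖ := by
        have hi : ‖EuclideanSpace.single i (1:ℂ)‖ = 1 := by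
          rw [EuclideanSpace.norm_single]; norm_num
        have hj : ‖((WithLp.equiv 2 _).symm (Pi.single j 1) : EuclideanSpace ℂ (Fin N))‖ = 1 := by
          have : ((WithLp.equiv 2 _).symm (Pi.single j (1:ℂ)) : EuclideanSpace ℂ (Fin N))
              = EuclideanSpace.single j (1:ℂ) := rfl
          rw [this, EuclideanSpace.norm_single]; norm_num
        rw [hi, hj]; simp

private lemma aux_coord (x : EuclideanSpace ℂ (Fin N)) (j : Fin N) :
    ‖x j‖ ≤ ‖x‖ := by
  have h : (x j : ℂ) = @inner ℂ _ _ (EuclideanSpace.single j (1:ℂ)) x := by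
    rw [EuclideanSpace.inner_single_left]; simp
  calc ‖x j‖ = ‖@inner ℂ _ _ (EuclideanSpace.single j (1:ℂ)) x‖ := by rw [← h]
    _ ≤ ‖EuclideanSpace.single j (1:ℂ)‖ * ‖x‖ := norm_inner_le_norm _ _
    _ ≤ ‖x‖ := by rw [EuclideanSpace.norm_single]; simp

private lemma aux_stdBasis_norm (i j : Fin N) (c : ℂ) :
    ‖Matrix.single i j c‖ ≤ ‖c‖ := by
  rw [Matrix.l2_opNorm_def]
  refine ContinuousLinearMap.opNorm_le_bound _ (norm_nonneg c) fun x => ?_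
  have h : (Matrix.toEuclideanLin (Matrix.single i j c)) x
      = EuclideanSpace.single i (c * (x j)) := by
    rw [Matrix.toEuclideanLin_apply]
    have := Matrix.single_mulVec i j c (WithLp.equiv 2 (Fin N → ℂ) x)
    simp only [WithLp.equiv_apply] at this
    rw [this]
    rfl
  show ‖(Matrix.toEuclideanLin (Matrix.single i j c)) x‖ ≤ _
  rw [h]
  calc ‖EuclideanSpace.single i (c * (x j))‖
      = ‖c * (x j)‖ := EuclideanSpace.norm_single _ _
    _ = ‖c‖ * ‖x j‖ := norm_mul _ _
    _ ≤ ‖c‖ * ‖x‖ := by gcongr; exact aux_coord x j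

private lemma aux_norm_le_sum (A : Matrix (Fin N) (Fin N) ℂ) :
    ‖A‖ ≤ ∑ i, ∑ j, ‖A i j‖ := by
  conv_lhs => rw [Matrix.matrix_eq_sum_single A]
  refine (norm_sum_le _ _).trans ?_
  refine Finset.sum_le_sum fun i _ => ?_
  refine (norm_sum_le _ _).trans ?_
  exact Finset.sum_le_sum fun j _ => aux_stdBasis_norm i j (A i j)

private lemma aux_psd_entry {A : Matrix (Fin N) (Fin N) ℂ} (hA : A.PosSemidef)
    (hdiag : ∀ i, A i i ≤ 1) (i j : Fin N) : ‖A i j‖ ≤ 1 := by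
  open scoped MatrixOrder in obtain ⟨B, hB⟩ := CStarAlgebra.nonneg_iff_eq_star_mul_self.mp hA.nonneg
  rw [Matrix.star_eq_conjTranspose] at hB
  subst hB
  set u : Fin N → EuclideanSpace ℂ (Fin N) :=
    fun i => (WithLp.equiv 2 _).symm (fun k => B k i) with hu
  have hentry : ∀ i j, (Bᴴ * B) i j = @inner ℂ _ _ (u i) (u j) := by
    intro i j
    rw [Matrix.mul_apply, hu]
    simp [EuclideanSpace.inner_toLp_toLp, dotProduct, Matrix.conjTranspose_apply, mul_comm]
  have hnorm : ∀ i, ‖u i‖ ≤ 1 := by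
    intro i
    have h1 : ((Bᴴ * B) i i).re ≤ 1 := by
      have := hdiag i
      rw [Complex.le_def] at this
      simpa using this.1
    have h2 : ((Bᴴ * B) i i).re = ‖u i‖ ^ 2 := by
      rw [hentry i i]
      exact @inner_self_eq_norm_sq ℂ _ _ _ _ (u i)
    have : ‖u i‖ ^ 2 ≤ 1 := h2 ▸ h1
    nlinarith [norm_nonneg (u i)]
  calc ‖(Bᴴ * B) i j‖ = ‖@inner ℂ _ _ (u i) (u j)‖ := by rw [hentry]
    _ ≤ ‖u i‖ * ‖u j‖ := norm_inner_le_norm _ _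
    _ ≤ 1 := mul_le_one₀ (hnorm i) (norm_nonneg _) (hnorm j)

private lemma aux_proj {W : Type*} [NormedAddCommGroup W] [NormedSpace ℝ W]
    (E : Matrix (Fin N) (Fin N) ℂ →ₗ[ℝ] W) :
    ∃ K : ℝ, 0 < K ∧ ∀ Γ : Matrix (Fin N) (Fin N) ℂ,
      ∃ Γ' : Matrix (Fin N) (Fin N) ℂ, E Γ' = 0 ∧ ‖Γ - Γ'‖ ≤ K * ‖E Γ‖ := by
  obtain ⟨g, hg⟩ := E.rangeRestrict.exists_rightInverse_of_surjective
    E.range_rangeRestrict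
  let G := LinearMap.toContinuousLinearMap g
  refine ⟨‖G‖ + 1, by positivity, fun Γ => ?_⟩
  refine ⟨Γ - g (E.rangeRestrict Γ), ?_, ?_⟩
  · have h1 : E (g (E.rangeRestrict Γ)) = E Γ := by
      have h2 : E.rangeRestrict (g (E.rangeRestrict Γ)) = E.rangeRestrict Γ :=
        congrFun (congrArg (fun f => f.toFun) hg) (E.rangeRestrict Γ)
      calc E (g (E.rangeRestrict Γ))
          = ((E.rangeRestrict (g (E.rangeRestrict Γ)) : LinearMap.range E) : W) := rfl
        _ = ((E.rangeRestrict Γ : LinearMap.range E) : W) := by rw [h2]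
        _ = E Γ := rfl
    rw [map_sub, h1, sub_self]
  · have : Γ - (Γ - g (E.rangeRestrict Γ)) = g (E.rangeRestrict Γ) := by abel
    rw [this]
    calc ‖g (E.rangeRestrict Γ)‖ = ‖G (E.rangeRestrict Γ)‖ := rfl
      _ ≤ ‖G‖ * ‖E.rangeRestrict Γ‖ := G.le_opNorm _
      _ = ‖G‖ * ‖E Γ‖ := by
          congr 1
      _ ≤ (‖G‖ + 1) * ‖E Γ‖ := by
          have := norm_nonneg (E Γ); nlinarith [norm_nonneg G]

private lemma aux_herm_smul (c : ℝ) {A : Matrix (Fin N) (Fin N) ℂ}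
    (hA : A.IsHermitian) : (c • A).IsHermitian := by
  refine Matrix.IsHermitian.ext fun i j => ?_
  have := hA.apply i j
  simp only [Matrix.smul_apply, star_smul, star_trivial, this]

private lemma aux_herm_add_ct (A : Matrix (Fin N) (Fin N) ℂ) :
    (A + Aᴴ).IsHermitian := by
  refine Matrix.IsHermitian.ext fun i j => ?_
  simp [Matrix.conjTranspose_apply, add_comm]

private lemma aux_q_smul (c : ℝ) (A : Matrix (Fin N) (Fin N) ℂ) (x : Fin N → ℂ) :
    (dotProduct (star x) ((c • A) *ᵥ x)).re
      = c * (dotProduct (star x) (A *ᵥ x)).re := by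
  rw [Matrix.smul_mulVec, dotProduct_smul, Complex.smul_re]
  rfl

private lemma aux_q_add (A B : Matrix (Fin N) (Fin N) ℂ) (x : Fin N → ℂ) :
    (dotProduct (star x) ((A + B) *ᵥ x)).re
      = (dotProduct (star x) (A *ᵥ x)).re
        + (dotProduct (star x) (B *ᵥ x)).re := by
  rw [Matrix.add_mulVec, dotProduct_add, Complex.add_re]

private lemma aux_q_sub (A B : Matrix (Fin N) (Fin N) ℂ) (x : Fin N → ℂ) :
    (dotProduct (star x) ((A - B) *ᵥ x)).re
      = (dotProduct (star x) (A *ᵥ x)).re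
        - (dotProduct (star x) (B *ᵥ x)).re := by
  rw [Matrix.sub_mulVec, dotProduct_sub, Complex.sub_re]

private lemma aux_q_one (x : Fin N → ℂ) :
    (dotProduct (star x) ((1 : Matrix (Fin N) (Fin N) ℂ) *ᵥ x)).re
      = ‖((WithLp.equiv 2 _).symm x : EuclideanSpace ℂ (Fin N))‖ ^ 2 := by
  rw [Matrix.one_mulVec, aux_nsq]

set_option maxHeartbeats 1600000 in
/-- Abstract form of the geometric soundness argument: given a constraint map
`E` with star-closed kernel whose constraints force the `(1,1)` entry to be
real, and a strictly feasible point `Γs ∈ ker E` with `Γs ⪰ μ·I`, `‖Γs‖ ≤ N`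
and `(Γs)₁₁ = 1`, there are constants `C, δ₀ > 0` such that any PSD matrix
`Γcomp` with unit `(1,1)` entry, diagonal `≤ 1`, and constraint violation
`‖E(Γcomp)‖ ≤ δ ≤ δ₀` is within `C·δ` (in operator norm) of a genuinely
feasible matrix: some PSD `Γ ∈ ker E` with `Γ₁₁ = 1`. -/
theorem stmt_15 {N : ℕ} (hN : 0 < N) {W : Type*} [NormedAddCommGroup W]
    [NormedSpace ℝ W]
    (E : Matrix (Fin N) (Fin N) ℂ →ₗ[ℝ] W)
    (hker_star : ∀ Γ : Matrix (Fin N) (Fin N) ℂ, E Γ = 0 → E Γ.conjTranspose = 0)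
    (hker_real : ∀ Γ : Matrix (Fin N) (Fin N) ℂ, E Γ = 0 → (Γ ⟨0, hN⟩ ⟨0, hN⟩).im = 0)
    (μ : ℝ) (hμ : 0 < μ) (Γs : Matrix (Fin N) (Fin N) ℂ)
    (hΓs_ker : E Γs = 0)
    (hΓs_pd : (Γs - μ • (1 : Matrix (Fin N) (Fin N) ℂ)).PosSemidef)
    (hΓs_norm : ‖Γs‖ ≤ N) (hΓs_one : Γs ⟨0, hN⟩ ⟨0, hN⟩ = 1) :
    ∃ C δ₀ : ℝ, 0 < C ∧ 0 < δ₀ ∧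
      ∀ (δ : ℝ) (Γcomp : Matrix (Fin N) (Fin N) ℂ),
        0 ≤ δ → δ ≤ δ₀ →
        Γcomp.PosSemidef → Γcomp ⟨0, hN⟩ ⟨0, hN⟩ = 1 →
        (∀ i, Γcomp i i ≤ 1) → ‖E Γcomp‖ ≤ δ →
        ∃ Γ : Matrix (Fin N) (Fin N) ℂ,
          Γ.PosSemidef ∧ E Γ = 0 ∧ Γ ⟨0, hN⟩ ⟨0, hN⟩ = 1 ∧
          ‖Γcomp - Γ‖ ≤ C * δ := by
  classical
  obtain ⟨K, hK, hproj⟩ := aux_proj E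
  set M : ℝ := μ/2 + ((N:ℝ)^2 + (N:ℝ)) with hM
  have hMpos : 0 < M := by positivity
  set C₁ : ℝ := K * (1 + M/μ) with hC₁
  have hC₁pos : 0 < C₁ := by positivity
  set B₁ : ℝ := (N:ℝ)^2 + 1/2 with hB₁
  have hB₁pos : 0 < B₁ := by positivity
  refine ⟨C₁ * (1 + 2*B₁), min (μ/(2*K)) (1/(2*C₁)), by positivity, by positivity, ?_⟩
  intro δ Γcomp hδ0 hδδ₀ hpsd hone hdiag hEc
  have hδ1 : δ ≤ μ/(2*K) := le_trans hδδ₀ (min_le_left _ _)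
  have hδ2 : δ ≤ 1/(2*C₁) := le_trans hδδ₀ (min_le_right _ _)
  have hKδ : K * δ ≤ μ / 2 := by
    calc K * δ ≤ K * (μ/(2*K)) := by gcongr
      _ = μ/2 := by field_simp
  have hC₁δ : C₁ * δ ≤ 1/2 := by
    calc C₁ * δ ≤ C₁ * (1/(2*C₁)) := by gcongr
      _ = 1/2 := by field_simp
  -- step 1 : projection
  obtain ⟨Γ₀', hker0', hclose0'⟩ := hproj Γcomp
  have hclose0'' : ‖Γcomp - Γ₀'‖ ≤ K * δ :=
    hclose0'.trans (mul_le_mul_of_nonneg_left hEc hK.le)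
  -- step 2 : hermitization
  set Γ₀ := (1/2 : ℝ) • (Γ₀' + Γ₀'ᴴ) with hΓ₀
  have hker0 : E Γ₀ = 0 := by
    rw [hΓ₀, E.map_smul, map_add, hker0', hker_star _ hker0']; simp
  have hherm0 : Γ₀.IsHermitian := aux_herm_smul _ (aux_herm_add_ct _)
  have hdiff : Γcomp - Γ₀ = (1/2 : ℝ) • ((Γcomp - Γ₀') + (Γcomp - Γ₀')ᴴ) := by
    rw [Matrix.conjTranspose_sub, hpsd.1.eq, hΓ₀]
    module
  have hclose0 : ‖Γcomp - Γ₀‖ ≤ K * δ := by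
    rw [hdiff, norm_smul, Real.norm_eq_abs]
    have h1 : ‖(Γcomp - Γ₀') + (Γcomp - Γ₀')ᴴ‖ ≤ 2 * (K*δ) := by
      refine (norm_add_le _ _).trans ?_
      rw [Matrix.l2_opNorm_conjTranspose]
      linarith
    rw [abs_of_pos (by norm_num : (0:ℝ) < 1/2)]
    linarith
  -- norm of Γcomp
  have hcomp_norm : ‖Γcomp‖ ≤ (N:ℝ)^2 := by
    refine (aux_norm_le_sum Γcomp).trans ?_
    calc ∑ i, ∑ j, ‖Γcomp i j‖ ≤ ∑ _i : Fin N, ∑ _j : Fin N, (1:ℝ) :=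
          Finset.sum_le_sum fun i _ => Finset.sum_le_sum fun j _ =>
            aux_psd_entry hpsd hdiag i j
      _ = (N:ℝ)^2 := by simp [sq]
  -- step 3 : convex combination
  set t : ℝ := K * δ / μ with hts
  have ht0 : 0 ≤ t := by positivity
  have ht1 : t ≤ 1/2 := by
    rw [hts, div_le_iff₀ hμ]; linarith
  have htμ : t * μ = K * δ := by rw [hts]; field_simp
  set Γ₁ := (1 - t) • Γ₀ + t • Γs with hΓ₁
  have hker1 : E Γ₁ = 0 := by
    have h1 : E Γ₁ = (1-t) • E Γ₀ + t • E Γs := by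
      rw [hΓ₁]; simp only [map_add, LinearMap.map_smul]
    rw [h1, hker0, hΓs_ker]; simp
  have hhermS : Γs.IsHermitian := by
    have h1 := hΓs_pd.1
    have h2 : Γs = (Γs - μ • 1) + μ • (1 : Matrix (Fin N) (Fin N) ℂ) := by abel
    rw [h2]
    exact h1.add (aux_herm_smul μ Matrix.isHermitian_one)
  have hherm1 : Γ₁.IsHermitian := (aux_herm_smul _ hherm0).add (aux_herm_smul _ hhermS)
  have hq0 : ∀ x : Fin N → ℂ,
      -(K*δ) * ‖((WithLp.equiv 2 _).symm x : EuclideanSpace ℂ (Fin N))‖^2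
        ≤ (dotProduct (star x) (Γ₀ *ᵥ x)).re := by
    intro x
    have h2 := aux_qbound (Γcomp - Γ₀) x
    have h3 : (dotProduct (star x) ((Γcomp - Γ₀) *ᵥ x)).re
        ≤ ‖dotProduct (star x) ((Γcomp - Γ₀) *ᵥ x)‖ := Complex.re_le_norm _
    have h4 : 0 ≤ (dotProduct (star x) (Γcomp *ᵥ x)).re :=
      (Complex.nonneg_iff.mp (hpsd.dotProduct_mulVec_nonneg x)).1
    have h5 := aux_q_sub Γcomp Γ₀ x
    have h6 : ‖Γcomp - Γ₀‖ * ‖((WithLp.equiv 2 _).symm x : EuclideanSpace ℂ (Fin N))‖^2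
        ≤ (K*δ) * ‖((WithLp.equiv 2 _).symm x : EuclideanSpace ℂ (Fin N))‖^2 := by
      gcongr
    linarith
  have hqs : ∀ x : Fin N → ℂ,
      μ * ‖((WithLp.equiv 2 _).symm x : EuclideanSpace ℂ (Fin N))‖^2
        ≤ (dotProduct (star x) (Γs *ᵥ x)).re := by
    intro x
    have h1 : 0 ≤ (dotProduct (star x) ((Γs - μ • 1) *ᵥ x)).re :=
      (Complex.nonneg_iff.mp (hΓs_pd.dotProduct_mulVec_nonneg x)).1
    have h2 := aux_q_sub Γs (μ • 1) x
    have h3 := aux_q_smul μ 1 x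
    have h4 := aux_q_one (N := N) x
    rw [h2, h3, h4] at h1
    linarith
  have hpsd1 : Γ₁.PosSemidef := by
    refine aux_psd_of_re hherm1 fun x => ?_
    have h0 := hq0 x
    have hs := hqs x
    have hq1 : (dotProduct (star x) (Γ₁ *ᵥ x)).re
        = (1-t) * (dotProduct (star x) (Γ₀ *ᵥ x)).re
          + t * (dotProduct (star x) (Γs *ᵥ x)).re := by
      rw [hΓ₁, aux_q_add, aux_q_smul (1-t) Γ₀, aux_q_smul t Γs]
    have hnsq : 0 ≤ ‖((WithLp.equiv 2 _).symm x : EuclideanSpace ℂ (Fin N))‖^2 := by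
      positivity
    nlinarith [mul_le_mul_of_nonneg_left h0 (by linarith : (0:ℝ) ≤ 1 - t),
      mul_le_mul_of_nonneg_left hs ht0,
      mul_nonneg (mul_nonneg ht0 (mul_nonneg hK.le hδ0)) hnsq]
  have hdiff1 : Γcomp - Γ₁ = (Γcomp - Γ₀) + t • (Γ₀ - Γs) := by
    rw [hΓ₁]; module
  have hΓ₀Γs : ‖Γ₀ - Γs‖ ≤ M := by
    have e1 : Γ₀ - Γs = (Γ₀ - Γcomp) + (Γcomp - Γs) := by abel
    have h1 : ‖Γ₀ - Γs‖ ≤ ‖Γ₀ - Γcomp‖ + (‖Γcomp‖ + ‖Γs‖) := by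
      calc ‖Γ₀ - Γs‖ = ‖(Γ₀ - Γcomp) + (Γcomp - Γs)‖ := by rw [e1]
        _ ≤ ‖Γ₀ - Γcomp‖ + ‖Γcomp - Γs‖ := norm_add_le _ _
        _ ≤ ‖Γ₀ - Γcomp‖ + (‖Γcomp‖ + ‖Γs‖) := by
            have := norm_sub_le Γcomp Γs; linarith
    rw [norm_sub_rev Γ₀ Γcomp] at h1
    rw [hM]
    linarith
  have hclose1 : ‖Γcomp - Γ₁‖ ≤ C₁ * δ := by
    rw [hdiff1]
    have h1 : ‖t • (Γ₀ - Γs)‖ ≤ t * M := by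
      rw [norm_smul, Real.norm_eq_abs, abs_of_nonneg ht0]
      exact mul_le_mul_of_nonneg_left hΓ₀Γs ht0
    have h2 : K*δ + t * M = C₁ * δ := by
      rw [hC₁, hts]; field_simp
    calc ‖(Γcomp - Γ₀) + t • (Γ₀ - Γs)‖ ≤ ‖Γcomp - Γ₀‖ + ‖t • (Γ₀ - Γs)‖ := norm_add_le _ _
      _ ≤ K*δ + t*M := add_le_add hclose0 h1
      _ = C₁ * δ := h2
  have hnorm1 : ‖Γ₁‖ ≤ B₁ := by
    have h1 : ‖Γ₁‖ ≤ ‖Γcomp‖ + ‖Γcomp - Γ₁‖ := by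
      have e2 : Γ₁ = Γcomp - (Γcomp - Γ₁) := by abel
      calc ‖Γ₁‖ = ‖Γcomp - (Γcomp - Γ₁)‖ := by rw [← e2]
        _ ≤ ‖Γcomp‖ + ‖Γcomp - Γ₁‖ := norm_sub_le _ _
    rw [hB₁]
    linarith
  -- step 4 : renormalization
  set z := Γ₁ ⟨0,hN⟩ ⟨0,hN⟩ with hz
  have hzim : z.im = 0 := hker_real _ hker1
  set a : ℝ := z.re with ha
  have hzval : z = (a:ℂ) := by
    apply Complex.ext <;> simp [ha, hzim]
  have hentry_close : |a - 1| ≤ C₁ * δ := by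
    have h1 : (Γcomp - Γ₁) ⟨0,hN⟩ ⟨0,hN⟩ = 1 - z := by
      rw [Matrix.sub_apply, hone, hz]
    have h2 := aux_entry_le (Γcomp - Γ₁) ⟨0,hN⟩ ⟨0,hN⟩
    rw [h1] at h2
    have h3 : |a - 1| ≤ ‖(1:ℂ) - z‖ := by
      have h4 : ((1:ℂ) - z).re = 1 - a := by simp [ha]
      calc |a-1| = |((1:ℂ)-z).re| := by rw [h4, abs_sub_comm]
        _ ≤ ‖(1:ℂ)-z‖ := Complex.abs_re_le_norm _
    linarith [h2.trans hclose1]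
  have ha_half : 1/2 ≤ a := by
    have h5 := abs_le.mp hentry_close
    linarith
  have ha_pos : 0 < a := by linarith
  refine ⟨a⁻¹ • Γ₁, ?_, ?_, ?_, ?_⟩
  · refine aux_psd_of_re (aux_herm_smul _ hherm1) fun x => ?_
    rw [aux_q_smul a⁻¹ Γ₁]
    exact mul_nonneg (by positivity) (Complex.nonneg_iff.mp (hpsd1.dotProduct_mulVec_nonneg x)).1
  · rw [E.map_smul, hker1, smul_zero]
  · show (a⁻¹ • Γ₁) ⟨0,hN⟩ ⟨0,hN⟩ = 1
    rw [Matrix.smul_apply, ← hz, hzval]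
    rw [Complex.real_smul, ← Complex.ofReal_mul, inv_mul_cancel₀ ha_pos.ne']
    norm_num
  · have hinv : |1 - a⁻¹| ≤ 2*(C₁*δ) := by
      have h5 : 1 - a⁻¹ = (a-1) * a⁻¹ := by field_simp
      have h6 : a⁻¹ ≤ 2 := by
        rw [show (2:ℝ) = (1/2:ℝ)⁻¹ by norm_num]
        exact inv_anti₀ (by norm_num) ha_half
      rw [h5, abs_mul, abs_inv, abs_of_pos ha_pos]
      calc |a-1| * a⁻¹ ≤ (C₁*δ) * 2 :=
            mul_le_mul hentry_close h6 (inv_nonneg.mpr ha_pos.le) (by positivity)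
        _ = 2*(C₁*δ) := by ring
    have e3 : Γcomp - a⁻¹ • Γ₁ = (Γcomp - Γ₁) + (Γ₁ - a⁻¹ • Γ₁) := by abel
    calc ‖Γcomp - a⁻¹ • Γ₁‖ = ‖(Γcomp - Γ₁) + (Γ₁ - a⁻¹ • Γ₁)‖ := by rw [e3]
      _ ≤ ‖Γcomp - Γ₁‖ + ‖Γ₁ - a⁻¹ • Γ₁‖ := norm_add_le _ _
      _ ≤ C₁*δ + |1 - a⁻¹| * ‖Γ₁‖ := by
          have h7 : Γ₁ - a⁻¹ • Γ₁ = (1 - a⁻¹) • Γ₁ := by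
            rw [sub_smul, one_smul]
          rw [h7, norm_smul, Real.norm_eq_abs]
          exact add_le_add hclose1 le_rfl
      _ ≤ C₁*δ + (2*(C₁*δ)) * B₁ := by
          refine add_le_add le_rfl ?_
          exact mul_le_mul hinv hnorm1 (norm_nonneg _) (by positivity)
      _ = C₁ * (1 + 2*B₁) * δ := by ring
end
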